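/- arXiv:math/0604250 — 6 statements merged into one kernel-verified Lean document; each statement's English description precedes it below -/
import Mathlib

section
/- A group G has uncountable cofinality and is Cayley bounded if and only if for every increasing exhaustive sequence of subsets W₀ ⊆ W₁ ⊆ W₂ ⊆ ... with ⋃ₙ Wₙ = G, there exist n and k such that Wₙᵏ = G (where Wₙᵏ denotes the set of products of k elements of Wₙ). -/
open Pointwise

/-- `G` has uncountable cofinality: it is not the union of a countable strictly
increasing chain of proper subgroups. -/
def UncountableCofinality (G : Type*) [Group G] : Prop :=
  ¬ ∃ H : ℕ → Subgroup G, (∀ n, H n < H (n + 1)) ∧ (∀ n, H n ≠ ⊤) ∧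
      (⋃ n, (H n : Set G)) = Set.univ

/-- `G` is Cayley bounded: every symmetric generating set containing the identity
generates by words of some fixed finite length. -/
def CayleyBounded (G : Type*) [Group G] : Prop :=
  ∀ E : Set G, (1 : G) ∈ E → E⁻¹ = E → Subgroup.closure E = ⊤ →
    ∃ n : ℕ, E ^ n = Set.univ

private lemma subgroup_pow_subset {G : Type*} [Group G] (H : Subgroup G) :
    ∀ k : ℕ, (H : Set G) ^ k ⊆ (H : Set G)
  | 0 => by
      simp only [pow_zero]
      intro x hx
      rw [Set.mem_one] at hx
      simpa [hx] using H.one_mem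
  | k + 1 => by
      rw [pow_succ]
      intro x hx
      obtain ⟨a, ha, b, hb, rfl⟩ := hx
      exact H.mul_mem (subgroup_pow_subset H k ha) hb

private lemma closure_subset_union_pow {G : Type*} [Group G] {E : Set G}
    (_h1 : (1 : G) ∈ E) (hsym : E⁻¹ = E) :
    (Subgroup.closure E : Set G) ⊆ ⋃ n, E ^ n := by
  intro x hx
  induction hx using Subgroup.closure_induction with
  | mem y hy => exact Set.mem_iUnion.2 ⟨1, by simpa using hy⟩
  | one => exact Set.mem_iUnion.2 ⟨0, by simp⟩
  | mul y z _ _ hy hz =>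
      obtain ⟨a, ha⟩ := Set.mem_iUnion.1 hy
      obtain ⟨b, hb⟩ := Set.mem_iUnion.1 hz
      exact Set.mem_iUnion.2 ⟨a + b, by rw [pow_add]; exact Set.mul_mem_mul ha hb⟩
  | inv y _ hy =>
      obtain ⟨a, ha⟩ := Set.mem_iUnion.1 hy
      refine Set.mem_iUnion.2 ⟨a, ?_⟩
      have : y⁻¹ ∈ (E ^ a)⁻¹ := Set.inv_mem_inv.2 ha
      rwa [← inv_pow, hsym] at this

theorem uncountable_cofinality_and_cayley_bounded_iff_exhaustive
    (G : Type*) [Group G] :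
    (UncountableCofinality G ∧ CayleyBounded G) ↔
      ∀ W : ℕ → Set G, Monotone W → (⋃ n, W n) = Set.univ →
        ∃ n k : ℕ, W n ^ k = Set.univ := by
  constructor
  · rintro ⟨hUC, hCB⟩ W hW hWu
    -- symmetrized sets
    set U : ℕ → Set G := fun n => (W n ∩ (W n)⁻¹) ∪ {1} with hU
    have hU1 : ∀ n, (1 : G) ∈ U n := fun n => Or.inr rfl
    have hUsym : ∀ n, (U n)⁻¹ = U n := by
      intro n
      simp [hU, Set.inter_comm]
    have hUmono : Monotone U := by
      intro a b hab
      exact Set.union_subset_union_left _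
        (Set.inter_subset_inter (hW hab) (Set.inv_subset_inv.2 (hW hab)))
    have hUuniv : (⋃ n, U n) = Set.univ := by
      apply Set.eq_univ_of_forall
      intro x
      have hx : x ∈ ⋃ n, W n := by rw [hWu]; trivial
      have hxi : x⁻¹ ∈ ⋃ n, W n := by rw [hWu]; trivial
      obtain ⟨a, ha⟩ := Set.mem_iUnion.1 hx
      obtain ⟨b, hb⟩ := Set.mem_iUnion.1 hxi
      refine Set.mem_iUnion.2 ⟨max a b, Or.inl ⟨hW (le_max_left a b) ha, ?_⟩⟩
      rw [Set.mem_inv]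
      exact hW (le_max_right a b) hb
    set H : ℕ → Subgroup G := fun n => Subgroup.closure (U n) with hH
    have hHmono : Monotone H := fun a b hab => Subgroup.closure_mono (hUmono hab)
    have hHuniv : (⋃ n, (H n : Set G)) = Set.univ := by
      apply Set.eq_univ_of_forall
      intro x
      have hx : x ∈ ⋃ n, U n := by rw [hUuniv]; trivial
      obtain ⟨a, ha⟩ := Set.mem_iUnion.1 hx
      exact Set.mem_iUnion.2 ⟨a, Subgroup.subset_closure ha⟩
    -- some H n is the whole group
    have htop : ∃ n, H n = ⊤ := by
      by_contra hne
      push_neg at hne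
      by_cases hstab : ∃ N, ∀ m, N ≤ m → H m ≤ H N
      · obtain ⟨N, hN⟩ := hstab
        apply hne N
        rw [eq_top_iff]
        intro x _
        have hx : x ∈ ⋃ n, (H n : Set G) := by rw [hHuniv]; trivial
        obtain ⟨a, ha⟩ := Set.mem_iUnion.1 hx
        have : x ∈ H (max a N) := hHmono (le_max_left a N) ha
        exact hN _ (le_max_right a N) this
      · push_neg at hstab
        have key : ∀ N, ∃ m, H N < H m := by
          intro N
          obtain ⟨m, hm1, hm2⟩ := hstab N
          exact ⟨m, lt_of_le_of_ne (hHmono hm1) (fun h => hm2 (le_of_eq h.symm))⟩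
        let f : ℕ → ℕ := fun n => Nat.rec 0 (fun _ prev => (key prev).choose) n
        have hf : ∀ n, H (f n) < H (f (n + 1)) := fun n => (key (f n)).choose_spec
        have hfmono : StrictMono f := strictMono_nat_of_lt_succ (by
          intro n
          by_contra hle
          push_neg at hle
          exact absurd (hHmono hle) (not_le_of_gt (hf n)))
        refine hUC ⟨fun n => H (f n), hf, fun n => hne (f n), ?_⟩
        apply Set.eq_univ_of_forall
        intro x
        have hx : x ∈ ⋃ n, (H n : Set G) := by rw [hHuniv]; trivial
        obtain ⟨a, ha⟩ := Set.mem_iUnion.1 hx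
        exact Set.mem_iUnion.2 ⟨a, hHmono (hfmono.le_apply) ha⟩
    obtain ⟨n, hn⟩ := htop
    obtain ⟨k, hk⟩ := hCB (U n) (hU1 n) (hUsym n) hn
    -- find m with 1 ∈ W m
    have h1 : (1 : G) ∈ ⋃ j, W j := by rw [hWu]; trivial
    obtain ⟨m, hm⟩ := Set.mem_iUnion.1 h1
    refine ⟨max n m, k, ?_⟩
    apply Set.eq_univ_of_univ_subset
    rw [← hk]
    apply Set.pow_subset_pow_left
    intro x hx
    rcases hx with ⟨hx1, _⟩ | hx2
    · exact hW (le_max_left n m) hx1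
    · rw [Set.mem_singleton_iff] at hx2
      rw [hx2]
      exact hW (le_max_right n m) hm
  · intro hB
    constructor
    · rintro ⟨H, hlt, hne, huniv⟩
      obtain ⟨n, k, hnk⟩ := hB (fun n => (H n : Set G))
        (fun a b hab => by exact_mod_cast (monotone_nat_of_le_succ
          (fun i => (hlt i).le) hab)) huniv
      apply hne n
      rw [eq_top_iff]
      intro x _
      have : x ∈ (H n : Set G) ^ k := by rw [hnk]; trivial
      exact subgroup_pow_subset (H n) k this
    · intro E h1 hsym hcl
      obtain ⟨n, k, hnk⟩ := hB (fun n => E ^ n)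
        (fun a b hab => Set.pow_subset_pow_right h1 hab)
        (by
          apply Set.eq_univ_of_univ_subset
          have := closure_subset_union_pow h1 hsym
          rw [hcl] at this
          simpa using this)
      exact ⟨n * k, by rwa [pow_mul]⟩
end

section
/- Let H be a Hilbert space written as an orthogonal direct sum of infinitely many closed infinite-dimensional subspaces H = ⊕ₙ Xₙ, and let (Wₙ) be an increasing exhaustive sequence of subsets of the unitary group U(H). Then there exists n such that for every unitary T with T[Xₙ] = Xₙ, there is S ∈ Wₙ with S restricted to Xₙ equal to T restricted to Xₙ. -/
open Pointwise
open scoped InnerProductSpace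

/-!
Suppose that for every `n` some unitary `Tₙ` leaving `Xₙ` invariant agrees on `Xₙ` with no element
of `Wₙ`. Since `H` is the Hilbert sum of the `Xₙ` and each `Tₙ` maps `Xₙ` isometrically onto
itself, the maps `Tₙ|Xₙ` glue to a single unitary `S`. Then `S ∈ Wₘ` for some `m`, and `S`
agrees with `Tₘ` on `Xₘ`, a contradiction.
-/

section Gluing

variable {ι 𝕜 E : Type*} [RCLike 𝕜] [NormedAddCommGroup E] [InnerProductSpace 𝕜 E]
  [CompleteSpace E]

theorem IsHilbertSum.linearIsometryEquiv_trans_symm_apply {G : ι → Type*}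
    [∀ i, NormedAddCommGroup (G i)] [∀ i, InnerProductSpace 𝕜 (G i)]
    {V W : ∀ i, G i →ₗᵢ[𝕜] E} (hV : IsHilbertSum 𝕜 G V) (hW : IsHilbertSum 𝕜 G W)
    (i : ι) (x : G i) :
    hV.linearIsometryEquiv.trans hW.linearIsometryEquiv.symm (V i x) = W i x := by
  classical
  rw [LinearIsometryEquiv.trans_apply, ← hV.linearIsometryEquiv_symm_apply_single,
    LinearIsometryEquiv.apply_symm_apply, hW.linearIsometryEquiv_symm_apply_single]

theorem exists_linearIsometryEquiv_eqOn_of_map_eq {X : ι → Submodule 𝕜 E}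
    [∀ i, CompleteSpace (X i)]
    (hX : OrthogonalFamily 𝕜 (fun i => X i) fun i => (X i).subtypeₗᵢ)
    (hdense : ⊤ ≤ (⨆ i, X i).topologicalClosure)
    (T : ι → E ≃ₗᵢ[𝕜] E) (hT : ∀ i, (X i).map (T i : E →ₗ[𝕜] E) = X i) :
    ∃ U : E ≃ₗᵢ[𝕜] E, ∀ i, ∀ x ∈ X i, U x = T i x := by
  let V : ∀ i, X i →ₗᵢ[𝕜] E := fun i => (T i).toLinearIsometry.comp (X i).subtypeₗᵢ
  have hrange : ∀ i, LinearMap.range (V i).toLinearMap = X i := fun i => by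
    change LinearMap.range ((T i : E →ₗ[𝕜] E) ∘ₗ (X i).subtype) = X i
    rw [LinearMap.range_comp, Submodule.range_subtype, hT i]
  have hV_mem : ∀ i (x : X i), V i x ∈ X i := fun i x => (hrange i).le ⟨x, rfl⟩
  have hV : IsHilbertSum 𝕜 (fun i => X i) V := by
    refine IsHilbertSum.mk (fun i j hij x y => hX hij ⟨_, hV_mem i x⟩ ⟨_, hV_mem j y⟩) ?_
    simpa only [hrange] using hdense
  refine ⟨(IsHilbertSum.mkInternal X hX hdense).linearIsometryEquiv.trans
    hV.linearIsometryEquiv.symm, fun i x hx => ?_⟩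
  exact IsHilbertSum.linearIsometryEquiv_trans_symm_apply _ hV i ⟨x, hx⟩

end Gluing

theorem exists_restriction_in_Wn_general
    (H : Type*) [NormedAddCommGroup H] [InnerProductSpace ℂ H] [CompleteSpace H]
    (X : ℕ → Submodule ℂ H)
    (hclosed : ∀ n, IsClosed (X n : Set H))
    (horth : ∀ m n, m ≠ n → ∀ x ∈ X m, ∀ y ∈ X n, ⟪x, y⟫_ℂ = 0)
    (hsum : (⨆ n, X n).topologicalClosure = ⊤)
    (W : ℕ → Set (unitary (H →L[ℂ] H)))
    (hexh : (⋃ n, W n) = Set.univ) :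
    ∃ n : ℕ, ∀ T : unitary (H →L[ℂ] H),
      (X n).map ((T : H →L[ℂ] H) : H →ₗ[ℂ] H) = X n →
      ∃ S ∈ W n, ∀ x ∈ X n, (S : H →L[ℂ] H) x = (T : H →L[ℂ] H) x := by
  by_contra! h
  choose T hT hbad using h
  have : ∀ n, CompleteSpace (X n) := fun n => (hclosed n).completeSpace_coe
  obtain ⟨U, hU⟩ := exists_linearIsometryEquiv_eqOn_of_map_eq
    (fun m n hmn x y => horth m n hmn x x.2 y y.2) hsum.ge
    (fun n => Unitary.linearIsometryEquiv (T n)) hT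
  let S := Unitary.linearIsometryEquiv.symm U
  obtain ⟨m, hm⟩ := Set.mem_iUnion.mp (hexh.ge (Set.mem_univ S))
  obtain ⟨x, hx, hne⟩ := hbad m S hm
  exact hne (hU m x hx)

theorem exists_restriction_in_Wn
    (H : Type*) [NormedAddCommGroup H] [InnerProductSpace ℂ H] [CompleteSpace H]
    [TopologicalSpace.SeparableSpace H]
    (X : ℕ → Submodule ℂ H)
    (hclosed : ∀ n, IsClosed (X n : Set H))
    (hinf : ∀ n, ¬ FiniteDimensional ℂ (X n))
    (horth : ∀ m n, m ≠ n → ∀ x ∈ X m, ∀ y ∈ X n, ⟪x, y⟫_ℂ = 0)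
    (hsum : (⨆ n, X n).topologicalClosure = ⊤)
    (W : ℕ → Set (unitary (H →L[ℂ] H)))
    (hmono : Monotone W)
    (hexh : (⋃ n, W n) = Set.univ) :
    ∃ n : ℕ, ∀ T : unitary (H →L[ℂ] H),
      (X n).map ((T : H →L[ℂ] H) : H →ₗ[ℂ] H) = X n →
      ∃ S ∈ W n, ∀ x ∈ X n, (S : H →L[ℂ] H) x = (T : H →L[ℂ] H) x :=
  exists_restriction_in_Wn_general H X hclosed horth hsum W hexh
end

section
/- Let H be a separable infinite-dimensional complex Hilbert space, X ⊆ H a closed infinite-dimensional subspace with infinite-dimensional orthogonal complement, and let V ⊆ U(H) be the set of unitaries T with T restricted to X⊥ equal to the identity. If K is any unitary with K[X] = X⊥, then every unitary T with T[X] = X lies in V·K·V·K*. -/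
/-!
Since `T` is unitary with `T X = X`, it commutes with the orthogonal projection `P` onto `X`, so
`T = A C` with `A = T P + (1 - P)` (`T` on `X`, the identity on `Xᗮ`) and `C = T (1 - P) + P`
(the identity on `X`, `T` on `Xᗮ`), both unitary. As `K` maps `Xᗮ` onto `Xᗮᗮ = X`, the unitary
`B = K⁻¹ C K` is the identity on `Xᗮ`, and `T = A K B K⁻¹`.
-/

namespace IsStarProjection

variable {R : Type*} [Ring R] [StarRing R] {p u : R}

theorem star_mul_self_mul_add_one_sub (hp : IsStarProjection p) (hu : u ∈ unitary R)
    (hup : Commute u p) : star (u * p + (1 - p)) * (u * p + (1 - p)) = 1 := by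
  have hpp : p * p = p := hp.isIdempotentElem.eq
  have hsp : star p = p := hp.isSelfAdjoint.star_eq
  have h₁ : star (u * p) * (u * p) = p := by
    rw [star_mul, hsp, mul_assoc, ← mul_assoc (star u), Unitary.star_mul_self_of_mem hu, one_mul,
      hpp]
  have h₂ : (1 - p) * (u * p) = 0 := by
    rw [hup.eq, ← mul_assoc, hp.one_sub_mul_self, zero_mul]
  have h₃ : star (u * p) * (1 - p) = 0 := by
    simpa [hsp] using congrArg star h₂
  rw [star_add, star_sub, star_one, hsp, add_mul, mul_add, mul_add, h₁, h₂, h₃,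
    hp.one_sub.isIdempotentElem.eq]
  abel

theorem mul_add_one_sub_mem_unitary (hp : IsStarProjection p) (hu : u ∈ unitary R)
    (hup : Commute u p) : u * p + (1 - p) ∈ unitary R := by
  have hsp : star p = p := hp.isSelfAdjoint.star_eq
  have hup' : Commute (star u) p := by simpa [hsp] using hup.star_star
  refine Unitary.mem_iff.2 ⟨hp.star_mul_self_mul_add_one_sub hu hup, ?_⟩
  simpa [hsp, hup.eq, hup'.eq] using
    hp.star_mul_self_mul_add_one_sub (Unitary.star_mem hu) hup'

theorem mul_one_sub_add_mem_unitary (hp : IsStarProjection p) (hu : u ∈ unitary R)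
    (hup : Commute u p) : u * (1 - p) + p ∈ unitary R := by
  simpa using hp.one_sub.mul_add_one_sub_mem_unitary hu ((Commute.one_right u).sub_right hup)

theorem mul_add_one_sub_mul_mul_one_sub_add (hp : IsStarProjection p) (hup : Commute u p) :
    (u * p + (1 - p)) * (u * (1 - p) + p) = u := by
  have huq : Commute u (1 - p) := (Commute.one_right u).sub_right hup
  calc (u * p + (1 - p)) * (u * (1 - p) + p)
      = u * (p * (1 - p)) * u + u * (p * p) + (1 - p) * (1 - p) * u + (1 - p) * p := by
        rw [huq.eq]; noncomm_ring
    _ = u * p + u * (1 - p) := by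
        rw [hp.mul_one_sub_self, hp.one_sub_mul_self, hp.isIdempotentElem.eq,
          hp.one_sub.isIdempotentElem.eq, huq.eq]
        simp
    _ = u := by rw [← mul_add, add_sub_cancel, mul_one]

end IsStarProjection

namespace Unitary

variable {𝕜 E : Type*} [RCLike 𝕜] [NormedAddCommGroup E] [InnerProductSpace 𝕜 E] [CompleteSpace E]

theorem map_orthogonal (u : unitary (E →L[𝕜] E)) (U : Submodule 𝕜 E) :
    Uᗮ.map ((u : E →L[𝕜] E) : E →ₗ[𝕜] E) = (U.map ((u : E →L[𝕜] E) : E →ₗ[𝕜] E))ᗮ :=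
  Submodule.map_orthogonal_equiv U (linearIsometryEquiv u)

theorem commute_starProjection_of_map_eq (u : unitary (E →L[𝕜] E)) {U : Submodule 𝕜 E}
    [U.HasOrthogonalProjection] (hU : U.map ((u : E →L[𝕜] E) : E →ₗ[𝕜] E) = U) :
    Commute (u : E →L[𝕜] E) U.starProjection := by
  ext x
  refine (U.eq_starProjection_of_mem_of_inner_eq_zero ?_ fun w hw => ?_).symm
  · exact hU.le (Submodule.mem_map_of_mem (U.starProjection_apply_mem x))
  · obtain ⟨y, hy, rfl⟩ := hU.ge hw
    rw [mul_apply_eq_comp, ContinuousLinearMap.coe_coe, ← map_sub, inner_map_map]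
    exact U.starProjection_inner_eq_zero x y hy

end Unitary

theorem mem_VKVK_of_invariant_general
    (H : Type*) [NormedAddCommGroup H] [InnerProductSpace ℂ H] [CompleteSpace H]
    (X : Submodule ℂ H) (hX : IsClosed (X : Set H))
    (V : Set (unitary (H →L[ℂ] H)))
    (hV : V = {T : unitary (H →L[ℂ] H) | ∀ x ∈ Xᗮ, (T : H →L[ℂ] H) x = x})
    (K : unitary (H →L[ℂ] H))
    (hK : X.map ((K : H →L[ℂ] H) : H →ₗ[ℂ] H) = Xᗮ) :
    ∀ T : unitary (H →L[ℂ] H), X.map ((T : H →L[ℂ] H) : H →ₗ[ℂ] H) = X →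
      ∃ A ∈ V, ∃ B ∈ V, T = A * K * B * K⁻¹ := by
  intro T hT
  have : CompleteSpace X := hX.completeSpace_coe
  have hP := isStarProjection_starProjection (U := X)
  have hTP := Unitary.commute_starProjection_of_map_eq T hT
  set P := X.starProjection
  let A : unitary (H →L[ℂ] H) := ⟨T * P + (1 - P), hP.mul_add_one_sub_mem_unitary T.2 hTP⟩
  let C : unitary (H →L[ℂ] H) := ⟨T * (1 - P) + P, hP.mul_one_sub_add_mem_unitary T.2 hTP⟩
  have hAC : T = A * C := Subtype.ext (hP.mul_add_one_sub_mul_mul_one_sub_add hTP).symm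
  have hKX : ∀ x ∈ Xᗮ, (K : H →L[ℂ] H) x ∈ X := by
    intro x hx
    rw [← X.orthogonal_orthogonal, ← hK, ← Unitary.map_orthogonal]
    exact Submodule.mem_map_of_mem hx
  subst hV
  refine ⟨A, fun x hx => ?_, K⁻¹ * C * K, fun x hx => ?_, by rw [hAC]; group⟩
  · simp [A, P, X.starProjection_apply_eq_zero_iff.2 hx]
  · have hC : (C : H →L[ℂ] H) ((K : H →L[ℂ] H) x) = (K : H →L[ℂ] H) x := by
      simp [C, P, Submodule.starProjection_eq_self_iff.2 (hKX x hx)]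
    simp only [Submonoid.coe_mul, mul_apply_eq_comp, hC]
    exact congr($(inv_mul_cancel K).val x)

theorem mem_VKVK_of_invariant
    (H : Type*) [NormedAddCommGroup H] [InnerProductSpace ℂ H] [CompleteSpace H]
    [TopologicalSpace.SeparableSpace H] (hH : ¬ FiniteDimensional ℂ H)
    (X : Submodule ℂ H) (hX : IsClosed (X : Set H))
    (hXinf : ¬ FiniteDimensional ℂ X) (hXpinf : ¬ FiniteDimensional ℂ Xᗮ)
    (V : Set (unitary (H →L[ℂ] H)))
    (hV : V = {T : unitary (H →L[ℂ] H) | ∀ x ∈ Xᗮ, (T : H →L[ℂ] H) x = x})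
    (K : unitary (H →L[ℂ] H))
    (hK : X.map ((K : H →L[ℂ] H) : H →ₗ[ℂ] H) = Xᗮ) :
    ∀ T : unitary (H →L[ℂ] H), X.map ((T : H →L[ℂ] H) : H →ₗ[ℂ] H) = X →
      ∃ A ∈ V, ∃ B ∈ V, T = A * K * B * K⁻¹ :=
  mem_VKVK_of_invariant_general H X hX V hV K hK
end

section
/- Let X ⊆ ℓ₂ be a finite-dimensional subspace and let W ⊆ U(ℓ₂) be a symmetric set containing 1 such that every unitary U with U restricted to X equal to the identity lies in W². Then there exists a unitary V such that U(ℓ₂) = W²·V·W²·V*·W². -/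
open Pointwise

/-! Let `S` be the group of unitaries fixing `X` pointwise, so that `S ⊆ W²`. Choose a unitary `V`
carrying an orthonormal basis `e` of `X` to an orthonormal family `u` in `Xᗮ`. Given a unitary `U`,
pick an orthonormal family `z` orthogonal to `X + U⁻¹X`; then `z` and `Uz` both lie in `Xᗮ`, so
there are `A, C ∈ S` with `Cu = z` and `Au = Uz`. Then `B = V⁻¹A⁻¹UCV` fixes `e`, hence `B ∈ S`,
and `U = AVBV⁻¹C⁻¹`. -/

section

open Submodule InnerProductSpace

variable {𝕜 H : Type*} [RCLike 𝕜] [NormedAddCommGroup H] [InnerProductSpace 𝕜 H]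

lemma LinearIsometryEquiv.exists_extend (K : Submodule 𝕜 H) [K.HasOrthogonalProjection]
    (e : K ≃ₗᵢ[𝕜] K) : ∃ T : H ≃ₗᵢ[𝕜] H, ∀ x : K, T x = e x := by
  let E : WithLp 2 (K × Kᗮ) ≃ₗᵢ[𝕜] WithLp 2 (K × Kᗮ) :=
    { (WithLp.linearEquiv 2 𝕜 (K × Kᗮ)).trans
        ((e.toLinearEquiv.prodCongr (LinearEquiv.refl 𝕜 Kᗮ)).trans
          (WithLp.linearEquiv 2 𝕜 (K × Kᗮ)).symm) with
      norm_map' := fun p => by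
        rw [← sq_eq_sq₀ (norm_nonneg _) (norm_nonneg _), WithLp.prod_norm_sq_eq_of_L2,
          WithLp.prod_norm_sq_eq_of_L2]
        simp }
  refine ⟨K.orthogonalDecomposition.trans (E.trans K.orthogonalDecomposition.symm), fun x => ?_⟩
  simp [E]

lemma Orthonormal.sumElim {ι κ : Type*} {u : ι → H} {v : κ → H} (hu : Orthonormal 𝕜 u)
    (hv : Orthonormal 𝕜 v) (huv : ∀ i j, ⟪u i, v j⟫_𝕜 = 0) :
    Orthonormal 𝕜 (Sum.elim u v) := by
  refine ⟨Sum.forall.2 ⟨hu.1, hv.1⟩, ?_⟩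
  rintro (i | i) (j | j) hij
  · exact hu.2 (by simpa using hij)
  · exact huv i j
  · exact inner_eq_zero_symm.mp (huv j i)
  · exact hv.2 (by simpa using hij)

namespace Orthonormal

variable {ι : Type*} [Fintype ι] {u v : ι → H}

lemma exists_orthonormalBasis_span (hv : Orthonormal 𝕜 v) :
    ∃ b : OrthonormalBasis ι 𝕜 (span 𝕜 (Set.range v)), ∀ i, (b i : H) = v i := by
  let b := Module.Basis.span hv.linearIndependent
  have hb : ∀ i, b i = ⟨v i, subset_span (Set.mem_range_self i)⟩ := Module.Basis.span_apply _
  refine ⟨b.toOrthonormalBasis ((funext hb).symm ▸ orthonormal_span hv), fun i => ?_⟩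
  rw [Module.Basis.coe_toOrthonormalBasis, hb]

lemma exists_linearIsometryEquiv_apply_eq_of_finiteDimensional [FiniteDimensional 𝕜 H]
    (hu : Orthonormal 𝕜 u) (hv : Orthonormal 𝕜 v) :
    ∃ T : H ≃ₗᵢ[𝕜] H, ∀ i, T (u i) = v i := by
  obtain ⟨bu, hbu⟩ := hu.exists_orthonormalBasis_span
  obtain ⟨bv, hbv⟩ := hv.exists_orthonormalBasis_span
  let L := (span 𝕜 (Set.range v)).subtypeₗᵢ.comp (bu.equiv bv (.refl ι)).toLinearIsometry
  refine ⟨L.extend.toLinearIsometryEquiv rfl, fun i => ?_⟩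
  rw [LinearIsometry.toLinearIsometryEquiv_apply, ← hbu, L.extend_apply]
  simp [L, hbv]

lemma exists_linearIsometryEquiv_apply_eq (hu : Orthonormal 𝕜 u) (hv : Orthonormal 𝕜 v) :
    ∃ T : H ≃ₗᵢ[𝕜] H, ∀ i, T (u i) = v i := by
  let F := span 𝕜 (Set.range u ∪ Set.range v)
  have : FiniteDimensional 𝕜 F :=
    .span_of_finite 𝕜 ((Set.finite_range u).union (Set.finite_range v))
  have huF : ∀ i, u i ∈ F := fun i => subset_span (Or.inl (Set.mem_range_self i))
  have hvF : ∀ i, v i ∈ F := fun i => subset_span (Or.inr (Set.mem_range_self i))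
  obtain ⟨e, he⟩ := (hu.codRestrict F huF).exists_linearIsometryEquiv_apply_eq_of_finiteDimensional
    (hv.codRestrict F hvF)
  obtain ⟨T, hT⟩ := LinearIsometryEquiv.exists_extend F e
  exact ⟨T, fun i => (hT ⟨u i, huF i⟩).trans (congrArg Subtype.val (he i))⟩

end Orthonormal

namespace Submodule

lemma not_finiteDimensional_orthogonal (hH : ¬ FiniteDimensional 𝕜 H)
    (F : Submodule 𝕜 H) [FiniteDimensional 𝕜 F] : ¬ FiniteDimensional 𝕜 Fᗮ := by
  intro hFperp
  have := F.finiteDimensional_sup Fᗮ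
  rw [sup_orthogonal_of_hasOrthogonalProjection] at this
  exact hH topEquiv.finiteDimensional

lemma exists_orthonormal_forall_mem_orthogonal (hH : ¬ FiniteDimensional 𝕜 H)
    (F : Submodule 𝕜 H) [FiniteDimensional 𝕜 F] (ι : Type*) [Fintype ι] :
    ∃ v : ι → H, Orthonormal 𝕜 v ∧ ∀ i, v i ∈ Fᗮ := by
  have hrank : (Fintype.card ι : Cardinal) ≤ Module.rank 𝕜 Fᗮ :=
    Cardinal.natCast_lt_aleph0.le.trans <| not_lt.mp <|
      Module.rank_lt_aleph0_iff.not.mpr (F.not_finiteDimensional_orthogonal hH)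
  obtain ⟨f, hf⟩ := exists_linearIndependent_of_le_rank hrank
  let v := Fᗮ.subtypeₗᵢ ∘ gramSchmidtNormed 𝕜 f ∘ Fintype.equivFin ι
  exact ⟨v, ((gramSchmidtNormed_orthonormal hf).comp _ (Fintype.equivFin ι).injective)
    |>.comp_linearIsometry Fᗮ.subtypeₗᵢ, fun i => (gramSchmidtNormed 𝕜 f _).2⟩

end Submodule

variable [CompleteSpace H]

local notation "𝒰" => unitary (H →L[𝕜] H)

lemma mem_fixingSubgroup_of_smul_basis {X : Submodule 𝕜 H} {ι : Type*}
    (b : Module.Basis ι 𝕜 X) {T : 𝒰} (hT : ∀ i, T • (b i : H) = b i) :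
    T ∈ fixingSubgroup 𝒰 (X : Set H) := by
  have : ((T : H →L[𝕜] H) : H →ₗ[𝕜] H) ∘ₗ X.subtype = X.subtype := b.ext hT
  exact (mem_fixingSubgroup_iff _).2 fun x hx => LinearMap.congr_fun this ⟨x, hx⟩

lemma exists_mem_fixingSubgroup_smul_eq (X : Submodule 𝕜 H) [FiniteDimensional 𝕜 X]
    {κ : Type*} [Fintype κ] {u v : κ → H} (hu : Orthonormal 𝕜 u) (hv : Orthonormal 𝕜 v)
    (huX : ∀ j, u j ∈ Xᗮ) (hvX : ∀ j, v j ∈ Xᗮ) :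
    ∃ T ∈ fixingSubgroup 𝒰 (X : Set H), ∀ j, T • u j = v j := by
  let b := stdOrthonormalBasis 𝕜 X
  have hb : Orthonormal 𝕜 (X.subtype ∘ b) := b.orthonormal.comp_linearIsometry X.subtypeₗᵢ
  have orth {w : κ → H} (hw : ∀ j, w j ∈ Xᗮ) : ∀ i j, ⟪(b i : H), w j⟫_𝕜 = 0 :=
    fun i j => inner_right_of_mem_orthogonal (b i).2 (hw j)
  obtain ⟨T, hT⟩ := (hb.sumElim hu (orth huX)).exists_linearIsometryEquiv_apply_eq
    (hb.sumElim hv (orth hvX))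
  refine ⟨Unitary.linearIsometryEquiv.symm T, ?_, fun j => hT (.inr j)⟩
  exact mem_fixingSubgroup_of_smul_basis b.toBasis fun i => hT (.inl i)

lemma exists_mem_fixingSubgroup_smul_smul_eq (hH : ¬ FiniteDimensional 𝕜 H)
    (X : Submodule 𝕜 H) [FiniteDimensional 𝕜 X] {κ : Type*} [Fintype κ] {u : κ → H}
    (hu : Orthonormal 𝕜 u) (huX : ∀ j, u j ∈ Xᗮ) (U : 𝒰) :
    ∃ A ∈ fixingSubgroup 𝒰 (X : Set H), ∃ C ∈ fixingSubgroup 𝒰 (X : Set H),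
      ∀ j, U • C • u j = A • u j := by
  let F := X ⊔ X.map ((U⁻¹ : 𝒰) : H →L[𝕜] H).toLinearMap
  obtain ⟨z, hz, hzF⟩ := F.exists_orthonormal_forall_mem_orthogonal hH κ
  have hzX : ∀ j, z j ∈ Xᗮ := fun j => orthogonal_le le_sup_left (hzF j)
  have hUzX : ∀ j, U • z j ∈ Xᗮ := fun j x hx => by
    have hUx : U⁻¹ • x ∈ F := mem_sup_right (mem_map_of_mem hx)
    calc ⟪x, U • z j⟫_𝕜 = ⟪U • U⁻¹ • x, U • z j⟫_𝕜 := by rw [smul_inv_smul]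
      _ = ⟪U⁻¹ • x, z j⟫_𝕜 := Unitary.inner_map_map U _ _
      _ = 0 := inner_right_of_mem_orthogonal hUx (hzF j)
  obtain ⟨C, hC, hCu⟩ := exists_mem_fixingSubgroup_smul_eq X hu hz huX hzX
  obtain ⟨A, hA, hAu⟩ := exists_mem_fixingSubgroup_smul_eq X hu
    (hz.comp_linearIsometryEquiv (Unitary.linearIsometryEquiv U)) huX hUzX
  exact ⟨A, hA, C, hC, fun j => by rw [hCu, hAu]; rfl⟩

theorem exists_fixingSubgroup_mul_singleton_mul_eq_univ (hH : ¬ FiniteDimensional 𝕜 H)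
    (X : Submodule 𝕜 H) [FiniteDimensional 𝕜 X] :
    ∃ V : 𝒰, (fixingSubgroup 𝒰 (X : Set H) : Set 𝒰) * {V} *
      (fixingSubgroup 𝒰 (X : Set H) : Set 𝒰) * {V⁻¹} *
      (fixingSubgroup 𝒰 (X : Set H) : Set 𝒰) = Set.univ := by
  let b := stdOrthonormalBasis 𝕜 X
  obtain ⟨u, hu, huX⟩ := X.exists_orthonormal_forall_mem_orthogonal hH (Fin (Module.finrank 𝕜 X))
  obtain ⟨V, hV⟩ :=
    (b.orthonormal.comp_linearIsometry X.subtypeₗᵢ).exists_linearIsometryEquiv_apply_eq hu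
  refine ⟨Unitary.linearIsometryEquiv.symm V, Set.eq_univ_of_forall fun U => ?_⟩
  set V' := Unitary.linearIsometryEquiv.symm V
  obtain ⟨A, hA, C, hC, hACu⟩ := exists_mem_fixingSubgroup_smul_smul_eq hH X hu huX U
  have hB : V'⁻¹ * A⁻¹ * U * C * V' ∈ fixingSubgroup 𝒰 (X : Set H) :=
    mem_fixingSubgroup_of_smul_basis b.toBasis fun i => by
      have hVi : V' • (b i : H) = u i := hV i
      simp only [mul_smul, OrthonormalBasis.coe_toBasis, hVi, hACu, inv_smul_smul,
        inv_smul_eq_iff]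
  have hU : U = A * V' * (V'⁻¹ * A⁻¹ * U * C * V') * V'⁻¹ * C⁻¹ := by group
  rw [hU]
  exact Set.mul_mem_mul (Set.mul_mem_mul (Set.mul_mem_mul (Set.mul_mem_mul hA rfl) hB) rfl)
    (inv_mem hC)

end

theorem univ_eq_W2VW2VW2_general
    (H : Type*) [NormedAddCommGroup H] [InnerProductSpace ℂ H] [CompleteSpace H]
    (hH : ¬ FiniteDimensional ℂ H)
    (X : Submodule ℂ H) (hX : FiniteDimensional ℂ X)
    (W : Set (unitary (H →L[ℂ] H)))
    (hW : ∀ U : unitary (H →L[ℂ] H),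
      (∀ x ∈ X, (U : H →L[ℂ] H) x = x) → U ∈ W ^ 2) :
    ∃ V : unitary (H →L[ℂ] H),
      W ^ 2 * {V} * W ^ 2 * {V⁻¹} * W ^ 2 = Set.univ := by
  obtain ⟨V, hV⟩ := exists_fixingSubgroup_mul_singleton_mul_eq_univ hH X
  have hS : (fixingSubgroup (unitary (H →L[ℂ] H)) (X : Set H) : Set _) ⊆ W ^ 2 :=
    fun U hU => hW U ((mem_fixingSubgroup_iff _).1 hU)
  refine ⟨V, Set.eq_univ_of_univ_subset (hV ▸ ?_)⟩
  gcongr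

theorem univ_eq_W2VW2VW2
    (H : Type*) [NormedAddCommGroup H] [InnerProductSpace ℂ H] [CompleteSpace H]
    [TopologicalSpace.SeparableSpace H] (hH : ¬ FiniteDimensional ℂ H)
    (X : Submodule ℂ H) (hX : FiniteDimensional ℂ X)
    (W : Set (unitary (H →L[ℂ] H)))
    (hWone : (1 : unitary (H →L[ℂ] H)) ∈ W) (hWsymm : W⁻¹ = W)
    (hW : ∀ U : unitary (H →L[ℂ] H),
      (∀ x ∈ X, (U : H →L[ℂ] H) x = x) → U ∈ W ^ 2) :
    ∃ V : unitary (H →L[ℂ] H),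
      W ^ 2 * {V} * W ^ 2 * {V⁻¹} * W ^ 2 = Set.univ :=
  univ_eq_W2VW2VW2_general H hH X hX W hW
end

section
/- Let u be an isometry of a Hilbert space H and p_u = 1 - uu*. Then the block operator on H ⊕ H given by (1/√2)·[[1, u*], [u, -uu* + √2·p_u]] is unitary. -/
/-!
Put `q = u u*`, an idempotent because `u* u = 1`, and `d = -q + √2 (1 - q)`. The operator
`B = [[1, u*], [u, d]]` is self-adjoint, and `u* q = u*`, `q u = u` give `u* d = -u*`, `d u = -u`
and `d² = q + 2 (1 - q)`. Hence `B² = 2`, so `B / √2` is a self-adjoint involution, i.e. unitary.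
-/

open scoped ENNReal

/-- The block operator $\begin{pmatrix} a & b \\ c & d\end{pmatrix}$ on `H ⊕ H`
(the Hilbert space direct sum `WithLp 2 (H × H)`). -/
noncomputable def blockOp {H : Type*} [NormedAddCommGroup H] [InnerProductSpace ℂ H]
    [CompleteSpace H] (a b c d : H →L[ℂ] H) :
    WithLp 2 (H × H) →L[ℂ] WithLp 2 (H × H) :=
  ((WithLp.prodContinuousLinearEquiv 2 ℂ H H).symm.toContinuousLinearMap).comp
    ((((a.comp (ContinuousLinearMap.fst ℂ H H)) + (b.comp (ContinuousLinearMap.snd ℂ H H))).prod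
      ((c.comp (ContinuousLinearMap.fst ℂ H H)) + (d.comp (ContinuousLinearMap.snd ℂ H H)))).comp
      (WithLp.prodContinuousLinearEquiv 2 ℂ H H).toContinuousLinearMap)

lemma isIdempotentElem_mul_of_mul_eq_one {M : Type*} [Monoid M] {u v : M} (h : v * u = 1) :
    IsIdempotentElem (u * v) := by
  rw [IsIdempotentElem, mul_assoc, ← mul_assoc v, h, one_mul]

lemma IsSelfAdjoint.inv_smul_mem_unitary {𝕜 A : Type*} [Field 𝕜] [StarRing 𝕜] [Ring A]
    [StarRing A] [Algebra 𝕜 A] [StarModule 𝕜 A] {b : A} {c : 𝕜} (hb : IsSelfAdjoint b)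
    (hc : IsSelfAdjoint c) (hc₀ : c ≠ 0) (hbb : b * b = (c * c) • 1) :
    c⁻¹ • b ∈ unitary A := by
  have hself : star (c⁻¹ • b) = c⁻¹ • b := (hc.inv₀.smul hb).star_eq
  have hsq : c⁻¹ • b * (c⁻¹ • b) = 1 := by
    rw [smul_mul_smul_comm, hbb, smul_smul, ← mul_inv, inv_mul_cancel₀ (mul_ne_zero hc₀ hc₀),
      one_smul]
  exact ⟨by rw [hself, hsq], by rw [hself, hsq]⟩

section CornerEntry

variable {R A : Type*} [CommRing R] [Ring A] [Algebra R A]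

/-- With `q = u u*` and `c = √2` this is the entry `-u u* + √2 p_u` of the block operator. -/
def cornerEntry (c : R) (q : A) : A := -q + c • (1 - q)

lemma cornerEntry_mul_of_mul_eq {c : R} {q u : A} (h : q * u = u) :
    cornerEntry c q * u = -u := by
  rw [cornerEntry, add_mul, neg_mul, smul_mul_assoc, sub_mul, one_mul, h, sub_self, smul_zero,
    add_zero]

lemma mul_cornerEntry_of_mul_eq {c : R} {q v : A} (h : v * q = v) :
    v * cornerEntry c q = -v := by
  rw [cornerEntry, mul_add, mul_neg, mul_smul_comm, mul_sub, mul_one, h, sub_self, smul_zero,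
    add_zero]

lemma IsIdempotentElem.cornerEntry_mul_self {q : A} (hq : IsIdempotentElem q) (c : R) :
    cornerEntry c q * cornerEntry c q = q + (c * c) • (1 - q) := by
  simp only [cornerEntry, add_mul, mul_add, neg_mul, mul_neg, neg_neg, mul_smul_comm,
    smul_mul_assoc, smul_smul, hq.eq, hq.mul_one_sub_self, hq.one_sub_mul_self,
    hq.one_sub.eq, smul_zero, neg_zero, add_zero, zero_add]

lemma IsSelfAdjoint.cornerEntry [StarRing R] [StarRing A] [StarModule R A] {c : R} {q : A}
    (hc : IsSelfAdjoint c) (hq : IsSelfAdjoint q) : IsSelfAdjoint (cornerEntry c q) :=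
  hq.neg.add (hc.smul ((IsSelfAdjoint.one A).sub hq))

end CornerEntry

lemma WithLp.prod_continuousLinearMap_ext {𝕜 M E F : Type*} [RCLike 𝕜] {p : ℝ≥0∞} [Fact (1 ≤ p)]
    [NormedAddCommGroup M] [NormedSpace 𝕜 M] [NormedAddCommGroup E] [NormedSpace 𝕜 E]
    [NormedAddCommGroup F] [NormedSpace 𝕜 F] {T S : M →L[𝕜] WithLp p (E × F)}
    (h₁ : ∀ x, (T x).fst = (S x).fst) (h₂ : ∀ x, (T x).snd = (S x).snd) : T = S :=
  ContinuousLinearMap.ext fun x ↦ WithLp.ofLp_injective p (Prod.ext (h₁ x) (h₂ x))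

section BlockOp

variable {H : Type*} [NormedAddCommGroup H] [InnerProductSpace ℂ H] [CompleteSpace H]

@[simp]
lemma blockOp_apply_fst (a b c d : H →L[ℂ] H) (x : WithLp 2 (H × H)) :
    (blockOp a b c d x).fst = a x.fst + b x.snd := rfl

@[simp]
lemma blockOp_apply_snd (a b c d : H →L[ℂ] H) (x : WithLp 2 (H × H)) :
    (blockOp a b c d x).snd = c x.fst + d x.snd := rfl

lemma star_blockOp (a b c d : H →L[ℂ] H) :
    star (blockOp a b c d) = blockOp (star a) (star c) (star b) (star d) := by
  refine ((ContinuousLinearMap.eq_adjoint_iff _ _).2 fun x y ↦ ?_).symm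
  simp only [WithLp.prod_inner_apply, WithLp.ofLp_fst, WithLp.ofLp_snd, blockOp_apply_fst,
    blockOp_apply_snd, ContinuousLinearMap.star_eq_adjoint, inner_add_left, inner_add_right,
    ContinuousLinearMap.adjoint_inner_left]
  ring

lemma isSelfAdjoint_blockOp {a d : H →L[ℂ] H} (ha : IsSelfAdjoint a) (hd : IsSelfAdjoint d)
    (c : H →L[ℂ] H) : IsSelfAdjoint (blockOp a (star c) c d) := by
  rw [IsSelfAdjoint, star_blockOp, ha.star_eq, hd.star_eq, star_star]

lemma blockOp_mul_blockOp (a b c d a' b' c' d' : H →L[ℂ] H) :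
    blockOp a b c d * blockOp a' b' c' d' =
      blockOp (a * a' + b * c') (a * b' + b * d') (c * a' + d * c') (c * b' + d * d') := by
  refine WithLp.prod_continuousLinearMap_ext (fun x ↦ ?_) (fun x ↦ ?_) <;>
    simp [mul_apply_eq_comp] <;> abel

lemma blockOp_smul_one_zero_zero_smul_one (r : ℂ) :
    blockOp (r • 1 : H →L[ℂ] H) 0 0 (r • 1) = r • 1 := by
  refine WithLp.prod_continuousLinearMap_ext (fun x ↦ ?_) (fun x ↦ ?_) <;> simp

end BlockOp

theorem blockOp_hadamard_like_unitary
    (H : Type*) [NormedAddCommGroup H] [InnerProductSpace ℂ H] [CompleteSpace H]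
    (u : H →L[ℂ] H) (hu : star u * u = 1) :
    (((Real.sqrt 2 : ℂ))⁻¹ : ℂ) •
        blockOp 1 (star u) u
          (-(u * star u) + (Real.sqrt 2 : ℂ) • (1 - u * star u)) ∈
      unitary (WithLp 2 (H × H) →L[ℂ] WithLp 2 (H × H)) := by
  set c : ℂ := (Real.sqrt 2 : ℂ)
  have hc : c * c = 2 := by
    rw [← Complex.ofReal_mul, Real.mul_self_sqrt zero_le_two, Complex.ofReal_ofNat]
  have hc_self : IsSelfAdjoint c := Complex.conj_ofReal _
  have hq : IsIdempotentElem (u * star u) := isIdempotentElem_mul_of_mul_eq_one hu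
  have hqu : u * star u * u = u := by rw [mul_assoc, hu, mul_one]
  have huq : star u * (u * star u) = star u := by rw [← mul_assoc, hu, one_mul]
  change c⁻¹ • blockOp 1 (star u) u (cornerEntry c (u * star u)) ∈ _
  have hc₀ : c ≠ 0 := Complex.ofReal_ne_zero.2 (by positivity)
  refine IsSelfAdjoint.inv_smul_mem_unitary ?_ hc_self hc₀ ?_
  · exact isSelfAdjoint_blockOp (.one _) (hc_self.cornerEntry (.mul_star_self u)) u
  · rw [blockOp_mul_blockOp, mul_one 1, one_mul, mul_one u, hu, mul_cornerEntry_of_mul_eq huq,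
      cornerEntry_mul_of_mul_eq hqu, add_neg_cancel, add_neg_cancel, hq.cornerEntry_mul_self, hc,
      ← blockOp_smul_one_zero_zero_smul_one]
    congr 1 <;> module
end

section
/- Let q be the orthogonal projection onto the orthogonal complement of the range of a partial isometry v, and let T be a positive contraction commuting with v*v. Then (q + vT²v*)^{1/2} = q + vTv*. -/
/-!
For a partial isometry, the C⋆-identity applied to `v (v*v) - v` gives `v (v*v) = v`, so `q`
annihilates the range of `v`. Hence the cross terms in the square of `b = q + vTv*` vanish, and
since `v*v` commutes with `T`, `(vTv*)² = vT(v*v)Tv* = vT²(v*v)v* = vT²v*`; thus `b² = q + vT²v*`.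
As `q` is a projection and `vTv*` is a conjugate of a positive element, `b ≥ 0`, so `b` is the
positive square root of `b²`.
-/

/-- `v` is a partial isometry iff `v*v` is an (orthogonal) projection. -/
def IsPartialIsometry {H : Type*} [NormedAddCommGroup H] [InnerProductSpace ℂ H]
    [CompleteSpace H] (v : H →L[ℂ] H) : Prop :=
  IsIdempotentElem (star v * v)

section NonUnital

variable {A : Type*} [NonUnitalNormedRing A] [StarRing A] [CStarRing A] {v : A}

theorem self_mul_star_mul_self_of_isIdempotentElem (hv : IsIdempotentElem (star v * v)) :
    v * (star v * v) = v := by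
  have hzero : star (v * (star v * v) - v) * (v * (star v * v) - v) = 0 := by
    calc star (v * (star v * v) - v) * (v * (star v * v) - v)
        = (star v * v) * ((star v * v) * (star v * v))
          - (star v * v) * (star v * v) - (star v * v) * (star v * v) + star v * v := by
          rw [star_sub, star_mul, (IsSelfAdjoint.star_mul_self v).star_eq]; noncomm_ring
      _ = 0 := by rw [hv.eq, hv.eq]; abel
  exact sub_eq_zero.mp ((CStarRing.star_mul_self_eq_zero_iff _).mp hzero)

theorem star_mul_self_mul_star_of_isIdempotentElem (hv : IsIdempotentElem (star v * v)) :
    star v * v * star v = star v := by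
  simpa only [star_mul, star_star, mul_assoc] using
    congr_arg star (self_mul_star_mul_self_of_isIdempotentElem hv)

end NonUnital

section Unital

variable {A : Type*} [NormedRing A] [StarRing A] [CStarRing A] {v : A}

theorem isStarProjection_one_sub_self_mul_star (hv : IsIdempotentElem (star v * v)) :
    IsStarProjection (1 - v * star v) := by
  refine IsStarProjection.one_sub ⟨?_, ?_⟩
  · rw [IsIdempotentElem, mul_assoc, ← mul_assoc (star v),
      star_mul_self_mul_star_of_isIdempotentElem hv]
  · simp only [IsSelfAdjoint, star_mul, star_star]

theorem one_sub_self_mul_star_mul_self (hv : IsIdempotentElem (star v * v)) :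
    (1 - v * star v) * v = 0 := by
  rw [sub_mul, one_mul, mul_assoc, self_mul_star_mul_self_of_isIdempotentElem hv, sub_self]

theorem star_mul_one_sub_self_mul_star (hv : IsIdempotentElem (star v * v)) :
    star v * (1 - v * star v) = 0 := by
  rw [mul_sub, mul_one, ← mul_assoc, star_mul_self_mul_star_of_isIdempotentElem hv, sub_self]

theorem sq_one_sub_self_mul_star_add_conj (hv : IsIdempotentElem (star v * v)) {T : A}
    (hcomm : star v * v * T = T * (star v * v)) :
    (1 - v * star v + v * T * star v) ^ 2 = 1 - v * star v + v * T ^ 2 * star v := by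
  set q := 1 - v * star v
  have hqv : q * (v * T * star v) = 0 := by
    rw [← mul_assoc, ← mul_assoc, one_sub_self_mul_star_mul_self hv, zero_mul, zero_mul]
  have hvq : v * T * star v * q = 0 := by
    rw [mul_assoc, star_mul_one_sub_self_mul_star hv, mul_zero]
  have hvTv : v * T * star v * (v * T * star v) = v * T ^ 2 * star v :=
    calc v * T * star v * (v * T * star v) = v * T * (star v * v * T) * star v := by noncomm_ring
      _ = v * T ^ 2 * (star v * v * star v) := by rw [hcomm]; noncomm_ring
      _ = v * T ^ 2 * star v := by rw [star_mul_self_mul_star_of_isIdempotentElem hv]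
  have hq : q * q = q := (isStarProjection_one_sub_self_mul_star hv).isIdempotentElem.eq
  rw [sq, add_mul, mul_add, mul_add, hq, hqv, hvq, hvTv, add_zero, zero_add]

end Unital

theorem cfc_sqrt_sq {A : Type*} [CStarAlgebra A] [PartialOrder A] [StarOrderedRing A]
    {a : A} (ha : 0 ≤ a) : cfc Real.sqrt (a ^ 2) = a := by
  rw [← cfcₙ_eq_cfc, ← CFC.sqrt_eq_real_sqrt (a ^ 2), CFC.sqrt_sq a]

theorem sqrt_of_q_add_vT2v_general
    (H : Type*) [NormedAddCommGroup H] [InnerProductSpace ℂ H] [CompleteSpace H]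
    (v T q : H →L[ℂ] H) (hv : IsPartialIsometry v) (hq : q = 1 - v * star v)
    (hpos : T.IsPositive)
    (hcomm : star v * v * T = T * (star v * v)) :
    cfc Real.sqrt (q + v * T ^ 2 * star v) = q + v * T * star v := by
  subst hq
  have hT : 0 ≤ T := (T.nonneg_iff_isPositive).mpr hpos
  have hnonneg : 0 ≤ 1 - v * star v + v * T * star v :=
    add_nonneg (isStarProjection_one_sub_self_mul_star hv).nonneg (star_right_conjugate_nonneg hT v)
  rw [← sq_one_sub_self_mul_star_add_conj hv hcomm, cfc_sqrt_sq hnonneg]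

theorem sqrt_of_q_add_vT2v
    (H : Type*) [NormedAddCommGroup H] [InnerProductSpace ℂ H] [CompleteSpace H]
    (v T q : H →L[ℂ] H) (hv : IsPartialIsometry v) (hq : q = 1 - v * star v)
    (hpos : T.IsPositive) (hcontr : ‖T‖ ≤ 1)
    (hcomm : star v * v * T = T * (star v * v)) :
    cfc Real.sqrt (q + v * T ^ 2 * star v) = q + v * T * star v :=
  sqrt_of_q_add_vT2v_general H v T q hv hq hpos hcomm
end
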